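/- arXiv:math/0505208 — 4 statements merged into one kernel-verified Lean document; each statement's English description precedes it below -/
import Mathlib

section
/- Let (Ω, 𝓕, P) be a probability space, T > 0, D ⊆ ℝ^d nonempty, m ∈ ℕ, and for each (t,x,k) ∈ [0,T] × D × {1,…,m} let X^{t,x,k} : [t,T] × Ω → D be a jointly measurable process. Let h : D → ℝ^m and g : [0,T] × D × ℝ^m → ℝ^m be bounded measurable, let c : [0,T] × D → ℝ^m be measurable with c^k(t,x) ≤ K for a constant K ≥ 0 and all k, t, x, and suppose g is Lipschitz-continuous in v uniformly in (t,x): there exists L < ∞ with |g(t,x,v1) − g(t,x,v2)| ≤ L |v1 − v2| for all (t,x) ∈ [0,T] × D and all v1, v2 ∈ ℝ^m. Then for every β > 0 and all bounded measurable v, w : [0,T] × D → ℝ^m, the operator F satisfies ‖Fv − Fw‖_β ≤ (L e^{KT} / β) ‖v − w‖_β. In particular, F is a contraction with respect to ‖·‖_β whenever β > L e^{KT}. -/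
/-!
For each component, the terminal terms of `Fv` and `Fw` cancel, and the running terms differ
pathwise by at most `L e^{KT} |v - w|(s, X_s) ≤ L e^{KT} e^{β(T-s)} ‖v - w‖_β`, since `g` is
`L`-Lipschitz and the discount `exp ∫ c` is at most `e^{KT}`. Integrating over `[t, T]` gives
`L e^{KT} ‖v - w‖_β (e^{β(T-t)} - 1) / β`, and the weight `e^{-β(T-t)}` brings this below
`L e^{KT} ‖v - w‖_β / β`.
-/

open MeasureTheory Set

/-- The weighted sup-norm `‖v‖_β = sup_{(t,x) ∈ [0,T] × D} e^{-β(T-t)} |v(t,x)|`,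
where `|·|` on `ℝ^m` is the max-norm. -/
noncomputable def betaNorm {d m : ℕ} (T β : ℝ) (D : Set (Fin d → ℝ))
    (v : ℝ → (Fin d → ℝ) → Fin m → ℝ) : ℝ :=
  sSup ((fun q : ℝ × (Fin d → ℝ) => Real.exp (-β * (T - q.1)) * ‖v q.1 q.2‖) ''
    (Set.Icc 0 T ×ˢ D))

theorem setIntegral_le_mul_measureReal_of_le {α : Type*} [MeasurableSpace α] {μ : Measure α}
    {s : Set α} {f : α → ℝ} {K : ℝ} (hK : 0 ≤ K) (hs : MeasurableSet s) (hμs : μ s ≠ ⊤)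
    (hf : ∀ x ∈ s, f x ≤ K) : ∫ x in s, f x ∂μ ≤ K * μ.real s := by
  by_cases hint : IntegrableOn f s μ
  · calc ∫ x in s, f x ∂μ ≤ ∫ _ in s, K ∂μ :=
          setIntegral_mono_on hint (integrableOn_const hμs) hs hf
      _ = K * μ.real s := by rw [setIntegral_const, smul_eq_mul, mul_comm]
  · rw [integral_undef hint]
    positivity

theorem measurable_setIntegral_Icc {α : Type*} [MeasurableSpace α] {G : α → ℝ → ℝ}
    (hG : Measurable fun q : α × ℝ => G q.1 q.2) (a : ℝ) :
    Measurable fun p : ℝ × α => ∫ u in Icc a p.1, G p.2 u := by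
  have hind : Measurable fun q : (ℝ × α) × ℝ => (Icc a q.1.1).indicator (G q.1.2) q.2 := by
    have hset : MeasurableSet {q : (ℝ × α) × ℝ | q.2 ∈ Icc a q.1.1} :=
      (measurableSet_le measurable_const measurable_snd).inter
        (measurableSet_le measurable_snd (measurable_fst.comp measurable_fst))
    exact Measurable.ite hset (hG.comp ((measurable_snd.comp measurable_fst).prodMk measurable_snd))
      measurable_const
  simp_rw [← integral_indicator measurableSet_Icc]
  exact hind.stronglyMeasurable.integral_prod_right'.measurable

theorem exp_neg_mul_setIntegral_exp_le {β t T : ℝ} (hβ : 0 < β) (htT : t ≤ T) :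
    Real.exp (-β * (T - t)) * ∫ s in Icc t T, Real.exp (β * (T - s)) ≤ β⁻¹ := by
  have hint : ∫ s in Icc t T, Real.exp (β * (T - s)) = (Real.exp (β * (T - t)) - 1) / β := by
    rw [integral_Icc_eq_integral_Ioc, ← intervalIntegral.integral_of_le htT,
      intervalIntegral.integral_comp_sub_left (fun u => Real.exp (β * u)),
      intervalIntegral.integral_comp_mul_left Real.exp hβ.ne', integral_exp]
    simp [div_eq_inv_mul]
  rw [hint, mul_div_assoc', mul_sub, ← Real.exp_add, neg_mul, neg_add_cancel, Real.exp_zero,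
    inv_eq_one_div]
  gcongr
  linarith [Real.exp_pos (-(β * (T - t)))]

section betaNorm

variable {d m : ℕ} {T β : ℝ} {D : Set (Fin d → ℝ)} {v : ℝ → (Fin d → ℝ) → Fin m → ℝ}

theorem betaNorm_nonneg : 0 ≤ betaNorm T β D v :=
  Real.sSup_nonneg <| by rintro _ ⟨q, -, rfl⟩; positivity

theorem betaNorm_le {C : ℝ} (hC : 0 ≤ C)
    (hv : ∀ t ∈ Icc 0 T, ∀ x ∈ D, Real.exp (-β * (T - t)) * ‖v t x‖ ≤ C) :
    betaNorm T β D v ≤ C :=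
  Real.sSup_le (by rintro _ ⟨⟨t, x⟩, ⟨ht, hx⟩, rfl⟩; exact hv t ht x hx) hC

theorem norm_le_exp_mul_betaNorm (hβ : 0 ≤ β) (hv : ∃ C, ∀ t ∈ Icc 0 T, ∀ x ∈ D, ‖v t x‖ ≤ C)
    {t : ℝ} {x : Fin d → ℝ} (ht : t ∈ Icc 0 T) (hx : x ∈ D) :
    ‖v t x‖ ≤ Real.exp (β * (T - t)) * betaNorm T β D v := by
  obtain ⟨C, hC⟩ := hv
  have hbdd : BddAbove ((fun q : ℝ × (Fin d → ℝ) => Real.exp (-β * (T - q.1)) * ‖v q.1 q.2‖) ''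
      (Icc 0 T ×ˢ D)) := by
    refine ⟨C, ?_⟩
    rintro _ ⟨⟨s, y⟩, ⟨hs, hy⟩, rfl⟩
    have hexp : Real.exp (-β * (T - s)) ≤ 1 :=
      Real.exp_le_one_iff.2 (by nlinarith [hs.2])
    calc Real.exp (-β * (T - s)) * ‖v s y‖ ≤ 1 * C := by
          gcongr
          exact hC s hs y hy
      _ = C := one_mul C
  have hle : Real.exp (-β * (T - t)) * ‖v t x‖ ≤ betaNorm T β D v :=
    le_csSup hbdd ⟨(t, x), ⟨ht, hx⟩, rfl⟩
  calc ‖v t x‖ = Real.exp (β * (T - t)) * (Real.exp (-β * (T - t)) * ‖v t x‖) := by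
        rw [← mul_assoc, ← Real.exp_add, neg_mul, add_neg_cancel, Real.exp_zero, one_mul]
    _ ≤ Real.exp (β * (T - t)) * betaNorm T β D v := by gcongr

theorem betaNorm_eq_zero_of_lipschitz_neg {E : Type*} [SeminormedAddCommGroup E]
    {g : ℝ → (Fin d → ℝ) → (Fin m → ℝ) → E} {L : ℝ} (hL : L < 0)
    (hgLip : ∀ t ∈ Icc 0 T, ∀ x ∈ D, ∀ z₁ z₂, ‖g t x z₁ - g t x z₂‖ ≤ L * ‖z₁ - z₂‖) :
    betaNorm T β D v = 0 := by
  refine le_antisymm (betaNorm_le le_rfl fun t ht x hx => ?_) betaNorm_nonneg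
  have hlip := (norm_nonneg _).trans (hgLip t ht x hx (v t x) 0)
  rw [sub_zero] at hlip
  have hv : ‖v t x‖ = 0 := by nlinarith [norm_nonneg (v t x)]
  simp [hv]

theorem betaNorm_le_of_norm_le_mul_integral_exp (hβ : 0 < β) {B : ℝ} (hB : 0 ≤ B)
    (hv : ∀ t ∈ Icc 0 T, ∀ x ∈ D, ‖v t x‖ ≤ B * ∫ s in Icc t T, Real.exp (β * (T - s))) :
    betaNorm T β D v ≤ B / β := by
  refine betaNorm_le (by positivity) fun t ht x hx => ?_
  calc Real.exp (-β * (T - t)) * ‖v t x‖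
      ≤ Real.exp (-β * (T - t)) * (B * ∫ s in Icc t T, Real.exp (β * (T - s))) := by
        gcongr
        exact hv t ht x hx
    _ = B * (Real.exp (-β * (T - t)) * ∫ s in Icc t T, Real.exp (β * (T - s))) := by ring
    _ ≤ B * β⁻¹ := by
        gcongr
        exact exp_neg_mul_setIntegral_exp_le hβ ht.2
    _ = B / β := (div_eq_mul_inv B β).symm

end betaNorm

theorem integrable_integral_of_norm_le {α Ω : Type*} [MeasurableSpace α] [MeasurableSpace Ω]
    {ν : Measure α} {μ : Measure Ω} [IsFiniteMeasure ν] [IsFiniteMeasure μ] {f : α → Ω → ℝ}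
    {C : ℝ} (hf : Measurable fun p : α × Ω => f p.1 p.2) (hC : ∀ᵐ s ∂ν, ∀ ω, ‖f s ω‖ ≤ C) :
    Integrable (fun ω => ∫ s, f s ω ∂ν) μ :=
  (Integrable.of_bound hf.aestronglyMeasurable C <|
    (Measure.quasiMeasurePreserving_fst.ae hC).mono fun p hp => hp p.2).integral_prod_right

/-- If `A` is not integrable, neither is `A + Bᵢ`, and both integrals are `0` by convention. -/
theorem abs_integral_add_sub_integral_add_le {Ω : Type*} [MeasurableSpace Ω] {μ : Measure Ω}
    [IsProbabilityMeasure μ] (A : Ω → ℝ) {B₁ B₂ : Ω → ℝ} {r : ℝ} (hB₁ : Integrable B₁ μ)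
    (hB₂ : Integrable B₂ μ) (hr : ∀ᵐ ω ∂μ, |B₁ ω - B₂ ω| ≤ r) :
    |∫ ω, A ω + B₁ ω ∂μ - ∫ ω, A ω + B₂ ω ∂μ| ≤ r := by
  by_cases hA : Integrable A μ
  · have hdiff : ∫ ω, A ω + B₁ ω ∂μ - ∫ ω, A ω + B₂ ω ∂μ = ∫ ω, B₁ ω - B₂ ω ∂μ := by
      rw [← integral_sub (hA.fun_add hB₁) (hA.fun_add hB₂)]
      simp only [add_sub_add_left_eq_sub]
    rw [hdiff, ← Real.norm_eq_abs]
    simpa using norm_integral_le_of_norm_le_const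
      (hr.mono fun ω hω => (Real.norm_eq_abs _).trans_le hω)
  · have hzero : ∀ B, Integrable B μ → ∫ ω, A ω + B ω ∂μ = 0 := fun B hB =>
      integral_undef fun hAB => hA ((integrable_add_iff_integrable_left' hB).1 hAB)
    obtain ⟨ω, hω⟩ := hr.exists
    rw [hzero B₁ hB₁, hzero B₂ hB₂, sub_self, abs_zero]
    exact (abs_nonneg _).trans hω

theorem abs_integral_add_integral_sub_le {α Ω : Type*} [MeasurableSpace α] [MeasurableSpace Ω]
    {ν : Measure α} {μ : Measure Ω} [IsFiniteMeasure ν] [IsProbabilityMeasure μ] (A : Ω → ℝ)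
    {f₁ f₂ : α → Ω → ℝ} {φ : α → ℝ} {C : ℝ} (hf₁ : Measurable fun p : α × Ω => f₁ p.1 p.2)
    (hf₂ : Measurable fun p : α × Ω => f₂ p.1 p.2) (hf₁C : ∀ᵐ s ∂ν, ∀ ω, ‖f₁ s ω‖ ≤ C)
    (hf₂C : ∀ᵐ s ∂ν, ∀ ω, ‖f₂ s ω‖ ≤ C) (hφ : Integrable φ ν)
    (hφf : ∀ᵐ s ∂ν, ∀ ω, |f₁ s ω - f₂ s ω| ≤ φ s) :
    |∫ ω, (A ω + ∫ s, f₁ s ω ∂ν) ∂μ - ∫ ω, (A ω + ∫ s, f₂ s ω ∂ν) ∂μ| ≤ ∫ s, φ s ∂ν := by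
  refine abs_integral_add_sub_integral_add_le A (integrable_integral_of_norm_le hf₁ hf₁C)
    (integrable_integral_of_norm_le hf₂ hf₂C) (ae_of_all _ fun ω => ?_)
  have hsection : ∀ f : α → Ω → ℝ, Measurable (fun p : α × Ω => f p.1 p.2) →
      (∀ᵐ s ∂ν, ∀ ω, ‖f s ω‖ ≤ C) → Integrable (f · ω) ν := fun f hf hfC =>
    .of_bound (hf.comp measurable_prodMk_right).aestronglyMeasurable C (hfC.mono fun s hs => hs ω)
  rw [← integral_sub (hsection f₁ hf₁ hf₁C) (hsection f₂ hf₂ hf₂C), ← Real.norm_eq_abs]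
  exact norm_integral_le_of_norm_le hφ (hφf.mono fun s hs => hs ω)

section FeynmanKac

variable {Ω : Type*} {d m : ℕ} {t T K : ℝ} {D : Set (Fin d → ℝ)}
  {Y : ℝ → Ω → Fin d → ℝ} {c : ℝ → (Fin d → ℝ) → Fin m → ℝ} {k : Fin m}

theorem exp_setIntegral_le_exp_mul (hK : 0 ≤ K) (ht : 0 ≤ t)
    (hYD : ∀ s ∈ Icc t T, ∀ ω, Y s ω ∈ D) (hcK : ∀ s ∈ Icc 0 T, ∀ x ∈ D, c s x k ≤ K)
    {s : ℝ} (hs : s ∈ Icc t T) (ω : Ω) :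
    Real.exp (∫ u in Icc t s, c u (Y u ω) k) ≤ Real.exp (K * T) := by
  gcongr
  calc ∫ u in Icc t s, c u (Y u ω) k ≤ K * volume.real (Icc t s) :=
        setIntegral_le_mul_measureReal_of_le hK measurableSet_Icc measure_Icc_lt_top.ne
          fun u hu => hcK u ⟨ht.trans hu.1, hu.2.trans hs.2⟩ _ (hYD u ⟨hu.1, hu.2.trans hs.2⟩ ω)
    _ ≤ K * T := by
        rw [Real.volume_real_Icc_of_le hs.1]
        gcongr
        linarith [hs.2]

theorem abs_integral_feynmanKac_sub_le [MeasurableSpace Ω] {P : Measure Ω} [IsProbabilityMeasure P] (A : Ω → ℝ)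
    {g : ℝ → (Fin d → ℝ) → (Fin m → ℝ) → Fin m → ℝ} {L : ℝ}
    {v w : ℝ → (Fin d → ℝ) → Fin m → ℝ} {ψ : ℝ → ℝ} (ht : t ∈ Icc 0 T)
    (hY : Measurable fun p : ℝ × Ω => Y p.1 p.2) (hYD : ∀ s ∈ Icc t T, ∀ ω, Y s ω ∈ D)
    (hc : Measurable fun q : ℝ × (Fin d → ℝ) => c q.1 q.2) (hK : 0 ≤ K)
    (hcK : ∀ s ∈ Icc 0 T, ∀ x ∈ D, c s x k ≤ K)
    (hg : Measurable fun q : ℝ × (Fin d → ℝ) × (Fin m → ℝ) => g q.1 q.2.1 q.2.2)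
    (hgb : ∃ C, ∀ s ∈ Icc 0 T, ∀ x ∈ D, ∀ z, ‖g s x z‖ ≤ C) (hL : 0 ≤ L)
    (hgLip : ∀ s ∈ Icc 0 T, ∀ x ∈ D, ∀ z₁ z₂, ‖g s x z₁ - g s x z₂‖ ≤ L * ‖z₁ - z₂‖)
    (hv : Measurable fun q : ℝ × (Fin d → ℝ) => v q.1 q.2)
    (hw : Measurable fun q : ℝ × (Fin d → ℝ) => w q.1 q.2) (hψ : IntegrableOn ψ (Icc t T))
    (hvw : ∀ s ∈ Icc t T, ∀ y ∈ D, ‖v s y - w s y‖ ≤ ψ s) :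
    |∫ ω, (A ω + ∫ s in Icc t T,
          g s (Y s ω) (v s (Y s ω)) k * Real.exp (∫ u in Icc t s, c u (Y u ω) k)) ∂P
      - ∫ ω, (A ω + ∫ s in Icc t T,
          g s (Y s ω) (w s (Y s ω)) k * Real.exp (∫ u in Icc t s, c u (Y u ω) k)) ∂P|
      ≤ L * Real.exp (K * T) * ∫ s in Icc t T, ψ s := by
  obtain ⟨C, hC⟩ := hgb
  have hdiscount : Measurable fun p : ℝ × Ω => Real.exp (∫ u in Icc t p.1, c u (Y u p.2) k) :=
    Real.measurable_exp.comp <| measurable_setIntegral_Icc (G := fun ω u => c u (Y u ω) k)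
      ((measurable_pi_apply k).comp (hc.comp (measurable_snd.prodMk (hY.comp measurable_swap)))) t
  have hdiscount_le : ∀ s ∈ Icc t T, ∀ ω,
      Real.exp (∫ r in Icc t s, c r (Y r ω) k) ≤ Real.exp (K * T) := fun s hs ω =>
    exp_setIntegral_le_exp_mul hK ht.1 hYD hcK hs ω
  have hmeas : ∀ u : ℝ → (Fin d → ℝ) → Fin m → ℝ,
      Measurable (fun q : ℝ × (Fin d → ℝ) => u q.1 q.2) →
      Measurable fun p : ℝ × Ω => g p.1 (Y p.1 p.2) (u p.1 (Y p.1 p.2)) k *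
        Real.exp (∫ r in Icc t p.1, c r (Y r p.2) k) := fun u hu =>
    ((measurable_pi_apply k).comp (hg.comp (measurable_fst.prodMk
      (hY.prodMk (hu.comp (measurable_fst.prodMk hY)))))).mul hdiscount
  have hbound : ∀ u : ℝ → (Fin d → ℝ) → Fin m → ℝ, ∀ᵐ s ∂volume.restrict (Icc t T), ∀ ω,
      ‖g s (Y s ω) (u s (Y s ω)) k * Real.exp (∫ r in Icc t s, c r (Y r ω) k)‖
        ≤ C * Real.exp (K * T) := fun u =>
    ae_restrict_of_forall_mem measurableSet_Icc fun s hs ω => by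
      have hgs : ‖g s (Y s ω) (u s (Y s ω)) k‖ ≤ C :=
        (norm_le_pi_norm _ k).trans (hC s ⟨ht.1.trans hs.1, hs.2⟩ _ (hYD s hs ω) _)
      rw [norm_mul, Real.norm_of_nonneg (Real.exp_pos _).le]
      exact mul_le_mul hgs (hdiscount_le s hs ω) (Real.exp_pos _).le ((norm_nonneg _).trans hgs)
  rw [← integral_const_mul]
  refine abs_integral_add_integral_sub_le A (hmeas v hv) (hmeas w hw) (hbound v) (hbound w)
    (hψ.const_mul _) (ae_restrict_of_forall_mem measurableSet_Icc fun s hs ω => ?_)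
  have hYs := hYD s hs ω
  have hlip : |g s (Y s ω) (v s (Y s ω)) k - g s (Y s ω) (w s (Y s ω)) k| ≤ L * ψ s :=
    calc _ ≤ ‖g s (Y s ω) (v s (Y s ω)) - g s (Y s ω) (w s (Y s ω))‖ :=
          norm_le_pi_norm (g s (Y s ω) (v s (Y s ω)) - g s (Y s ω) (w s (Y s ω))) k
      _ ≤ L * ‖v s (Y s ω) - w s (Y s ω)‖ := hgLip s ⟨ht.1.trans hs.1, hs.2⟩ _ hYs _ _
      _ ≤ L * ψ s := by gcongr; exact hvw s hs _ hYs
  rw [← sub_mul, abs_mul, Real.abs_exp]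
  calc _ ≤ L * ψ s * Real.exp (K * T) :=
        mul_le_mul hlip (hdiscount_le s hs ω) (Real.exp_pos _).le ((abs_nonneg _).trans hlip)
    _ = _ := by ring

end FeynmanKac

theorem feynman_kac_operator_contraction_estimate_general
    {Ω : Type*} [MeasurableSpace Ω] (P : Measure Ω) [IsProbabilityMeasure P]
    {d m : ℕ} (T : ℝ)
    (D : Set (Fin d → ℝ))
    (X : ℝ → (Fin d → ℝ) → Fin m → ℝ → Ω → Fin d → ℝ)
    (hXmeas : ∀ t ∈ Icc (0 : ℝ) T, ∀ x ∈ D, ∀ k : Fin m,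
      Measurable fun q : ℝ × Ω => X t x k q.1 q.2)
    (hXD : ∀ t ∈ Icc (0 : ℝ) T, ∀ x ∈ D, ∀ k : Fin m, ∀ s ∈ Icc t T, ∀ ω,
      X t x k s ω ∈ D)
    (h : (Fin d → ℝ) → Fin m → ℝ)
    (g : ℝ → (Fin d → ℝ) → (Fin m → ℝ) → Fin m → ℝ)
    (c : ℝ → (Fin d → ℝ) → Fin m → ℝ)
    (hgmeas : Measurable fun q : ℝ × (Fin d → ℝ) × (Fin m → ℝ) => g q.1 q.2.1 q.2.2)
    (hgb : ∃ C, ∀ t ∈ Icc (0 : ℝ) T, ∀ x ∈ D, ∀ v : Fin m → ℝ, ‖g t x v‖ ≤ C)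
    (hcmeas : Measurable fun q : ℝ × (Fin d → ℝ) => c q.1 q.2)
    (K : ℝ) (hK : 0 ≤ K)
    (hcK : ∀ t ∈ Icc (0 : ℝ) T, ∀ x ∈ D, ∀ k : Fin m, c t x k ≤ K)
    (L : ℝ)
    (hgLip : ∀ t ∈ Icc (0 : ℝ) T, ∀ x ∈ D, ∀ v₁ v₂ : Fin m → ℝ,
      ‖g t x v₁ - g t x v₂‖ ≤ L * ‖v₁ - v₂‖)
    (F : (ℝ → (Fin d → ℝ) → Fin m → ℝ) → ℝ → (Fin d → ℝ) → Fin m → ℝ)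
    (hF : ∀ v : ℝ → (Fin d → ℝ) → Fin m → ℝ, ∀ t ∈ Icc (0 : ℝ) T, ∀ x ∈ D, ∀ k : Fin m,
      F v t x k =
        ∫ ω, (h (X t x k T ω) k * Real.exp (∫ s in Icc t T, c s (X t x k s ω) k)
          + ∫ s in Icc t T,
              g s (X t x k s ω) (v s (X t x k s ω)) k
                * Real.exp (∫ u in Icc t s, c u (X t x k u ω) k)) ∂P) :
    ∀ β > (0 : ℝ), ∀ v w : ℝ → (Fin d → ℝ) → Fin m → ℝ,
      Measurable (fun q : ℝ × (Fin d → ℝ) => v q.1 q.2) →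
      Measurable (fun q : ℝ × (Fin d → ℝ) => w q.1 q.2) →
      (∃ C, ∀ t ∈ Icc (0 : ℝ) T, ∀ x ∈ D, ‖v t x‖ ≤ C) →
      (∃ C, ∀ t ∈ Icc (0 : ℝ) T, ∀ x ∈ D, ‖w t x‖ ≤ C) →
      betaNorm T β D (fun t x => F v t x - F w t x)
          ≤ (L * Real.exp (K * T) / β) * betaNorm T β D (fun t x => v t x - w t x)
        ∧ (L * Real.exp (K * T) < β → L * Real.exp (K * T) / β < 1) := by
  intro β hβ v w hv hw ⟨Cv, hCv⟩ ⟨Cw, hCw⟩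
  refine ⟨?_, fun hlt => (div_lt_one hβ).2 hlt⟩
  rcases lt_or_ge L 0 with hL | hL
  · rw [betaNorm_eq_zero_of_lipschitz_neg hL hgLip, betaNorm_eq_zero_of_lipschitz_neg hL hgLip,
      mul_zero]
  set M := betaNorm T β D (fun t x => v t x - w t x)
  have hvw : ∀ s ∈ Icc 0 T, ∀ y ∈ D, ‖v s y - w s y‖ ≤ Real.exp (β * (T - s)) * M :=
    fun s hs y hy => norm_le_exp_mul_betaNorm (v := fun t x => v t x - w t x) hβ.le
      ⟨Cv + Cw, fun t ht x hx =>
        (norm_sub_le _ _).trans (add_le_add (hCv t ht x hx) (hCw t ht x hx))⟩ hs hy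
  have hLM : 0 ≤ L * Real.exp (K * T) * M := mul_nonneg (by positivity) betaNorm_nonneg
  rw [div_mul_eq_mul_div]
  refine betaNorm_le_of_norm_le_mul_integral_exp hβ hLM fun t ht x hx => ?_
  have hI := setIntegral_nonneg (μ := volume) measurableSet_Icc
    fun s (_ : s ∈ Icc t T) => (Real.exp_pos (β * (T - s))).le
  refine (pi_norm_le_iff_of_nonneg (mul_nonneg hLM hI)).2 fun k => ?_
  rw [Pi.sub_apply, Real.norm_eq_abs, hF v t ht x hx k, hF w t ht x hx k, mul_assoc,
    ← integral_const_mul]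
  exact abs_integral_feynmanKac_sub_le _ ht (hXmeas t ht x hx k) (hXD t ht x hx k) hcmeas hK
    (fun s hs y hy => hcK s hs y hy k) hgmeas hgb hL hgLip hv hw
    (by fun_prop : Continuous fun s => M * Real.exp (β * (T - s))).integrableOn_Icc
    fun s hs y hy => (hvw s ⟨ht.1.trans hs.1, hs.2⟩ y hy).trans_eq (mul_comm _ _)

/-- The Feynman–Kac operator `F` satisfies
`‖Fv − Fw‖_β ≤ (L e^{KT} / β) ‖v − w‖_β` for every `β > 0` and all bounded
measurable `v, w`; in particular `F` is a contraction w.r.t. `‖·‖_β` whenever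
`β > L e^{KT}`. -/
theorem feynman_kac_operator_contraction_estimate
    {Ω : Type*} [MeasurableSpace Ω] (P : Measure Ω) [IsProbabilityMeasure P]
    {d m : ℕ} (T : ℝ) (hT : 0 < T)
    (D : Set (Fin d → ℝ)) (hD : D.Nonempty)
    (X : ℝ → (Fin d → ℝ) → Fin m → ℝ → Ω → Fin d → ℝ)
    (hXmeas : ∀ t ∈ Icc (0 : ℝ) T, ∀ x ∈ D, ∀ k : Fin m,
      Measurable fun q : ℝ × Ω => X t x k q.1 q.2)
    (hXD : ∀ t ∈ Icc (0 : ℝ) T, ∀ x ∈ D, ∀ k : Fin m, ∀ s ∈ Icc t T, ∀ ω,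
      X t x k s ω ∈ D)
    (h : (Fin d → ℝ) → Fin m → ℝ)
    (g : ℝ → (Fin d → ℝ) → (Fin m → ℝ) → Fin m → ℝ)
    (c : ℝ → (Fin d → ℝ) → Fin m → ℝ)
    (hhmeas : Measurable h) (hhb : ∃ C, ∀ x ∈ D, ‖h x‖ ≤ C)
    (hgmeas : Measurable fun q : ℝ × (Fin d → ℝ) × (Fin m → ℝ) => g q.1 q.2.1 q.2.2)
    (hgb : ∃ C, ∀ t ∈ Icc (0 : ℝ) T, ∀ x ∈ D, ∀ v : Fin m → ℝ, ‖g t x v‖ ≤ C)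
    (hcmeas : Measurable fun q : ℝ × (Fin d → ℝ) => c q.1 q.2)
    (K : ℝ) (hK : 0 ≤ K)
    (hcK : ∀ t ∈ Icc (0 : ℝ) T, ∀ x ∈ D, ∀ k : Fin m, c t x k ≤ K)
    (L : ℝ)
    (hgLip : ∀ t ∈ Icc (0 : ℝ) T, ∀ x ∈ D, ∀ v₁ v₂ : Fin m → ℝ,
      ‖g t x v₁ - g t x v₂‖ ≤ L * ‖v₁ - v₂‖)
    (F : (ℝ → (Fin d → ℝ) → Fin m → ℝ) → ℝ → (Fin d → ℝ) → Fin m → ℝ)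
    (hF : ∀ v : ℝ → (Fin d → ℝ) → Fin m → ℝ, ∀ t ∈ Icc (0 : ℝ) T, ∀ x ∈ D, ∀ k : Fin m,
      F v t x k =
        ∫ ω, (h (X t x k T ω) k * Real.exp (∫ s in Icc t T, c s (X t x k s ω) k)
          + ∫ s in Icc t T,
              g s (X t x k s ω) (v s (X t x k s ω)) k
                * Real.exp (∫ u in Icc t s, c u (X t x k u ω) k)) ∂P) :
    ∀ β > (0 : ℝ), ∀ v w : ℝ → (Fin d → ℝ) → Fin m → ℝ,
      Measurable (fun q : ℝ × (Fin d → ℝ) => v q.1 q.2) →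
      Measurable (fun q : ℝ × (Fin d → ℝ) => w q.1 q.2) →
      (∃ C, ∀ t ∈ Icc (0 : ℝ) T, ∀ x ∈ D, ‖v t x‖ ≤ C) →
      (∃ C, ∀ t ∈ Icc (0 : ℝ) T, ∀ x ∈ D, ‖w t x‖ ≤ C) →
      betaNorm T β D (fun t x => F v t x - F w t x)
          ≤ (L * Real.exp (K * T) / β) * betaNorm T β D (fun t x => v t x - w t x)
        ∧ (L * Real.exp (K * T) < β → L * Real.exp (K * T) / β < 1) :=
  feynman_kac_operator_contraction_estimate_general P T D X hXmeas hXD h g c hgmeas hgb hcmeas K hK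
    hcK L hgLip F hF
end

section
/- Let T > 0, D ⊆ ℝ^d nonempty, m ∈ ℕ. For k, j ∈ {1,…,m}, let λ^{kj} : [0,T] × D → [0,∞) be bounded by Λ ≥ 0, and let δ^k, f^{kj} : [0,T] × D × ℝ^m → ℝ satisfy the linear growth bound |δ^k(t,x,v)| ≤ C(1 + max_i |v^i|) and |f^{kj}(t,x,v)| ≤ C(1 + max_i |v^i|) for a constant C ≥ 0 and all t, x, v, and be locally Lipschitz-continuous in v, uniformly in (t,x). Define g : [0,T] × D × ℝ^m → ℝ^m by g^k(t,x,v) := δ^k(t,x,v) + Σ_{j≠k} λ^{kj}(t,x) (v^j − v^k + f^{kj}(t,x,v)). Then g satisfies the monotonicity condition (2.20) with constants K1 = K2 = C(1 + (m−1)Λ), and g is locally Lipschitz-continuous in v, uniformly in (t,x). -/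
open Set Finset

/-! At a maximal coordinate `vᵏ` the exchange terms `λᵏʲ (vʲ - vᵏ)` are nonpositive, so `gᵏ` is
bounded above by `δᵏ` plus the `m - 1` terms `λᵏʲ fᵏʲ`, each of linear growth; the lower bound at a
minimal coordinate is the same estimate applied to `-v`, `-δ`, `-f`. Local Lipschitz continuity
holds because `g` is assembled from the coordinates of `v`, `δ` and `f` by sums and by
multiplication with the bounded coefficients `λᵏʲ`. -/

def LocallyLipschitzUniformlyOn {α E F : Type*} [SeminormedAddCommGroup E]
    [SeminormedAddCommGroup F] (s : Set α) (Φ : α → E → F) : Prop :=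
  ∀ K : Set E, IsCompact K → ∃ L, ∀ a ∈ s, ∀ v₁ ∈ K, ∀ v₂ ∈ K,
    ‖Φ a v₁ - Φ a v₂‖ ≤ L * ‖v₁ - v₂‖

namespace LocallyLipschitzUniformlyOn

variable {α β E F ι : Type*} [SeminormedAddCommGroup E] [SeminormedAddCommGroup F]
  {s : Set α} {F₁ F₂ : α → E → F}

theorem of_lipschitzWith {K : NNReal} {φ : E → F} (hφ : LipschitzWith K φ) :
    LocallyLipschitzUniformlyOn s fun _ => φ :=
  fun _ _ => ⟨K, fun _ _ v₁ _ v₂ _ => hφ.norm_sub_le v₁ v₂⟩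

theorem add (h₁ : LocallyLipschitzUniformlyOn s F₁) (h₂ : LocallyLipschitzUniformlyOn s F₂) :
    LocallyLipschitzUniformlyOn s fun a v => F₁ a v + F₂ a v := by
  intro K hK
  obtain ⟨L₁, hL₁⟩ := h₁ K hK
  obtain ⟨L₂, hL₂⟩ := h₂ K hK
  refine ⟨L₁ + L₂, fun a ha v₁ hv₁ v₂ hv₂ => ?_⟩
  calc ‖F₁ a v₁ + F₂ a v₁ - (F₁ a v₂ + F₂ a v₂)‖
      = ‖(F₁ a v₁ - F₁ a v₂) + (F₂ a v₁ - F₂ a v₂)‖ := by rw [add_sub_add_comm]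
    _ ≤ ‖F₁ a v₁ - F₁ a v₂‖ + ‖F₂ a v₁ - F₂ a v₂‖ := norm_add_le _ _
    _ ≤ (L₁ + L₂) * ‖v₁ - v₂‖ := by
      rw [add_mul]; exact add_le_add (hL₁ a ha v₁ hv₁ v₂ hv₂) (hL₂ a ha v₁ hv₁ v₂ hv₂)

theorem neg (h : LocallyLipschitzUniformlyOn s F₁) :
    LocallyLipschitzUniformlyOn s fun a v => -F₁ a v := by
  simpa only [LocallyLipschitzUniformlyOn, ← neg_sub', norm_neg] using h

theorem sub (h₁ : LocallyLipschitzUniformlyOn s F₁) (h₂ : LocallyLipschitzUniformlyOn s F₂) :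
    LocallyLipschitzUniformlyOn s fun a v => F₁ a v - F₂ a v := by
  simpa only [sub_eq_add_neg] using h₁.add h₂.neg

theorem finsetSum {t : Finset ι} {G : ι → α → E → F}
    (h : ∀ i ∈ t, LocallyLipschitzUniformlyOn s (G i)) :
    LocallyLipschitzUniformlyOn s fun a v => ∑ i ∈ t, G i a v := by
  classical
  induction t using Finset.induction_on with
  | empty => exact of_lipschitzWith (K := 0) (LipschitzWith.const 0)
  | insert i t hi ih =>
    simp only [sum_insert hi]
    exact (h i (mem_insert_self i t)).add (ih fun j hj => h j (mem_insert_of_mem hj))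

theorem const_mul {c : α → ℝ} {Λ : ℝ} (hc : ∀ a ∈ s, |c a| ≤ Λ)
    {G : α → E → ℝ} (h : LocallyLipschitzUniformlyOn s G) :
    LocallyLipschitzUniformlyOn s fun a v => c a * G a v := by
  intro K hK
  obtain ⟨L, hL⟩ := h K hK
  refine ⟨Λ * L, fun a ha v₁ hv₁ v₂ hv₂ => ?_⟩
  rw [← mul_sub, norm_mul, Real.norm_eq_abs, mul_assoc]
  exact mul_le_mul (hc a ha) (hL a ha v₁ hv₁ v₂ hv₂) (norm_nonneg _)
    ((abs_nonneg _).trans (hc a ha))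

theorem pi [Fintype ι] {G : α → E → ι → ℝ}
    (h : ∀ i, LocallyLipschitzUniformlyOn s fun a v => G a v i) :
    LocallyLipschitzUniformlyOn s G := by
  intro K hK
  choose L hL using fun i => h i K hK
  refine ⟨∑ i, L i, fun a ha v₁ hv₁ v₂ hv₂ => ?_⟩
  have hL' : ∀ i, ‖G a v₁ i - G a v₂ i‖ ≤ L i * ‖v₁ - v₂‖ := fun i => hL i a ha v₁ hv₁ v₂ hv₂
  have hL'_nonneg : ∀ i, 0 ≤ L i * ‖v₁ - v₂‖ := fun i => (norm_nonneg _).trans (hL' i)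
  rw [sum_mul, pi_norm_le_iff_of_nonneg (sum_nonneg fun i _ => hL'_nonneg i)]
  exact fun i => (hL' i).trans
    (single_le_sum (f := fun j => L j * ‖v₁ - v₂‖) (fun j _ => hL'_nonneg j) (mem_univ i))

theorem prod_iff {t : Set β} {G : α → β → E → F} :
    LocallyLipschitzUniformlyOn (s ×ˢ t) (fun p => G p.1 p.2) ↔
      ∀ K : Set E, IsCompact K → ∃ L, ∀ a ∈ s, ∀ b ∈ t, ∀ v₁ ∈ K, ∀ v₂ ∈ K,
        ‖G a b v₁ - G a b v₂‖ ≤ L * ‖v₁ - v₂‖ := by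
  simp only [LocallyLipschitzUniformlyOn, Prod.forall, mem_prod, and_imp, @forall_comm (_ ∈ s) β]

end LocallyLipschitzUniformlyOn

section Interaction

variable {ι : Type*} [Fintype ι] [DecidableEq ι] {lam f v : ι → ℝ} {δ Λ B : ℝ} {k : ι}

theorem interaction_le_of_forall_le (hlam : ∀ j, 0 ≤ lam j ∧ lam j ≤ Λ) (hδ : |δ| ≤ B)
    (hf : ∀ j, |f j| ≤ B) (hk : ∀ j, v j ≤ v k) :
    δ + ∑ j ∈ univ.erase k, lam j * (v j - v k + f j) ≤
      (1 + ((Fintype.card ι : ℝ) - 1) * Λ) * B := by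
  have hterm : ∀ j, lam j * (v j - v k + f j) ≤ Λ * B := fun j => by
    obtain ⟨hl₀, hlΛ⟩ := hlam j
    have hB : 0 ≤ B := (abs_nonneg _).trans hδ
    nlinarith [hk j, le_abs_self (f j), hf j]
  have hsum := sum_le_card_nsmul (univ.erase k) _ _ fun j _ => hterm j
  rw [nsmul_eq_mul, cast_card_erase_of_mem (mem_univ k), card_univ] at hsum
  linarith [le_abs_self δ]

theorem neg_le_interaction_of_forall_le (hlam : ∀ j, 0 ≤ lam j ∧ lam j ≤ Λ) (hδ : |δ| ≤ B)
    (hf : ∀ j, |f j| ≤ B) (hk : ∀ j, v k ≤ v j) :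
    -((1 + ((Fintype.card ι : ℝ) - 1) * Λ) * B) ≤
      δ + ∑ j ∈ univ.erase k, lam j * (v j - v k + f j) := by
  have h := interaction_le_of_forall_le (δ := -δ) (B := B) (f := -f) (v := -v) hlam
    (by rwa [abs_neg]) (fun j => by rw [Pi.neg_apply, abs_neg]; exact hf j)
    (fun j => neg_le_neg (hk j))
  have hneg : -δ + ∑ j ∈ univ.erase k, lam j * ((-v) j - (-v) k + (-f) j) =
      -(δ + ∑ j ∈ univ.erase k, lam j * (v j - v k + f j)) := by
    simp only [Pi.neg_apply, neg_add, ← sum_neg_distrib]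
    congr 1; refine sum_congr rfl fun j _ => ?_; ring
  linarith

end Interaction

theorem linear_interaction_monotone_and_locally_lipschitz_general
    {d m : ℕ} (T : ℝ)
    (D : Set (Fin d → ℝ))
    (Λ : ℝ) (C : ℝ)
    (lam : Fin m → Fin m → ℝ → (Fin d → ℝ) → ℝ)
    (hlam : ∀ k j : Fin m, ∀ t ∈ Icc (0 : ℝ) T, ∀ x ∈ D,
      0 ≤ lam k j t x ∧ lam k j t x ≤ Λ)
    (δ : Fin m → ℝ → (Fin d → ℝ) → (Fin m → ℝ) → ℝ)
    (f : Fin m → Fin m → ℝ → (Fin d → ℝ) → (Fin m → ℝ) → ℝ)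
    (hδgrowth : ∀ k : Fin m, ∀ t ∈ Icc (0 : ℝ) T, ∀ x ∈ D, ∀ v : Fin m → ℝ,
      |δ k t x v| ≤ C * (1 + ⨆ i, |v i|))
    (hfgrowth : ∀ k j : Fin m, ∀ t ∈ Icc (0 : ℝ) T, ∀ x ∈ D, ∀ v : Fin m → ℝ,
      |f k j t x v| ≤ C * (1 + ⨆ i, |v i|))
    (hδLip : ∀ k : Fin m, ∀ 𝒦 : Set (Fin m → ℝ), IsCompact 𝒦 →
      ∃ L, ∀ t ∈ Icc (0 : ℝ) T, ∀ x ∈ D, ∀ v₁ ∈ 𝒦, ∀ v₂ ∈ 𝒦,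
        |δ k t x v₁ - δ k t x v₂| ≤ L * ‖v₁ - v₂‖)
    (hfLip : ∀ k j : Fin m, ∀ 𝒦 : Set (Fin m → ℝ), IsCompact 𝒦 →
      ∃ L, ∀ t ∈ Icc (0 : ℝ) T, ∀ x ∈ D, ∀ v₁ ∈ 𝒦, ∀ v₂ ∈ 𝒦,
        |f k j t x v₁ - f k j t x v₂| ≤ L * ‖v₁ - v₂‖)
    (g : ℝ → (Fin d → ℝ) → (Fin m → ℝ) → Fin m → ℝ)
    (hg : ∀ (k : Fin m) t x (v : Fin m → ℝ),
      g t x v k = δ k t x v +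
        ∑ j ∈ Finset.univ.erase k, lam k j t x * (v j - v k + f k j t x v)) :
    (∀ k : Fin m, ∀ t ∈ Icc (0 : ℝ) T, ∀ x ∈ D, ∀ v : Fin m → ℝ,
      ((∀ j, v j ≤ v k) →
        g t x v k ≤ C * (1 + ((m : ℝ) - 1) * Λ)
          + C * (1 + ((m : ℝ) - 1) * Λ) * ⨆ j, |v j|) ∧
      ((∀ j, v k ≤ v j) →
        -(C * (1 + ((m : ℝ) - 1) * Λ)
          + C * (1 + ((m : ℝ) - 1) * Λ) * ⨆ j, |v j|) ≤ g t x v k)) ∧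
    (∀ 𝒦 : Set (Fin m → ℝ), IsCompact 𝒦 →
      ∃ L, ∀ t ∈ Icc (0 : ℝ) T, ∀ x ∈ D, ∀ v₁ ∈ 𝒦, ∀ v₂ ∈ 𝒦,
        ‖g t x v₁ - g t x v₂‖ ≤ L * ‖v₁ - v₂‖) := by
  refine ⟨fun k t ht x hx v => ?_, ?_⟩
  · have hlam' := fun j => hlam k j t ht x hx
    have hfgrowth' := fun j => hfgrowth k j t ht x hx v
    have hK : (1 + ((Fintype.card (Fin m) : ℝ) - 1) * Λ) * (C * (1 + ⨆ i, |v i|)) =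
        C * (1 + ((m : ℝ) - 1) * Λ) + C * (1 + ((m : ℝ) - 1) * Λ) * ⨆ j, |v j| := by
      rw [Fintype.card_fin]; ring
    rw [hg, ← hK]
    exact ⟨interaction_le_of_forall_le hlam' (hδgrowth k t ht x hx v) hfgrowth',
      neg_le_interaction_of_forall_le hlam' (hδgrowth k t ht x hx v) hfgrowth'⟩
  · open LocallyLipschitzUniformlyOn in
    have hδ : ∀ k, LocallyLipschitzUniformlyOn (Icc 0 T ×ˢ D) fun p => δ k p.1 p.2 := fun k =>
      prod_iff.2 (by simpa only [Real.norm_eq_abs] using hδLip k)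
    have hf : ∀ k j, LocallyLipschitzUniformlyOn (Icc 0 T ×ˢ D) fun p => f k j p.1 p.2 :=
      fun k j => prod_iff.2 (by simpa only [Real.norm_eq_abs] using hfLip k j)
    have hlam_abs : ∀ k j, ∀ p ∈ Icc 0 T ×ˢ D, |lam k j p.1 p.2| ≤ Λ := fun k j p hp => by
      obtain ⟨h₀, hΛ⟩ := hlam k j p.1 hp.1 p.2 hp.2
      rwa [abs_of_nonneg h₀]
    refine prod_iff.1 (pi fun k => ?_)
    simp only [hg]
    exact (hδ k).add <| finsetSum fun j _ => const_mul (hlam_abs k j) <|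
      ((of_lipschitzWith (LipschitzWith.eval j)).sub
        (of_lipschitzWith (LipschitzWith.eval k))).add (hf k j)

/-- The interaction term (2.22),
`gᵏ(t,x,v) = δᵏ(t,x,v) + Σ_{j≠k} λᵏʲ(t,x)(vʲ − vᵏ + fᵏʲ(t,x,v))`,
with `0 ≤ λᵏʲ ≤ Λ`, `|δᵏ|, |fᵏʲ| ≤ C(1 + max_i |vⁱ|)` and `δᵏ, fᵏʲ` locally
Lipschitz in `v` uniformly in `(t,x)`, satisfies the monotonicity condition
(2.20) with `K1 = K2 = C(1 + (m−1)Λ)` and is locally Lipschitz in `v`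
uniformly in `(t,x)`. -/
theorem linear_interaction_monotone_and_locally_lipschitz
    {d m : ℕ} (T : ℝ) (hT : 0 < T)
    (D : Set (Fin d → ℝ)) (hD : D.Nonempty)
    (Λ : ℝ) (hΛ : 0 ≤ Λ) (C : ℝ) (hC : 0 ≤ C)
    (lam : Fin m → Fin m → ℝ → (Fin d → ℝ) → ℝ)
    (hlam : ∀ k j : Fin m, ∀ t ∈ Icc (0 : ℝ) T, ∀ x ∈ D,
      0 ≤ lam k j t x ∧ lam k j t x ≤ Λ)
    (δ : Fin m → ℝ → (Fin d → ℝ) → (Fin m → ℝ) → ℝ)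
    (f : Fin m → Fin m → ℝ → (Fin d → ℝ) → (Fin m → ℝ) → ℝ)
    (hδgrowth : ∀ k : Fin m, ∀ t ∈ Icc (0 : ℝ) T, ∀ x ∈ D, ∀ v : Fin m → ℝ,
      |δ k t x v| ≤ C * (1 + ⨆ i, |v i|))
    (hfgrowth : ∀ k j : Fin m, ∀ t ∈ Icc (0 : ℝ) T, ∀ x ∈ D, ∀ v : Fin m → ℝ,
      |f k j t x v| ≤ C * (1 + ⨆ i, |v i|))
    (hδLip : ∀ k : Fin m, ∀ 𝒦 : Set (Fin m → ℝ), IsCompact 𝒦 →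
      ∃ L, ∀ t ∈ Icc (0 : ℝ) T, ∀ x ∈ D, ∀ v₁ ∈ 𝒦, ∀ v₂ ∈ 𝒦,
        |δ k t x v₁ - δ k t x v₂| ≤ L * ‖v₁ - v₂‖)
    (hfLip : ∀ k j : Fin m, ∀ 𝒦 : Set (Fin m → ℝ), IsCompact 𝒦 →
      ∃ L, ∀ t ∈ Icc (0 : ℝ) T, ∀ x ∈ D, ∀ v₁ ∈ 𝒦, ∀ v₂ ∈ 𝒦,
        |f k j t x v₁ - f k j t x v₂| ≤ L * ‖v₁ - v₂‖)
    (g : ℝ → (Fin d → ℝ) → (Fin m → ℝ) → Fin m → ℝ)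
    (hg : ∀ (k : Fin m) t x (v : Fin m → ℝ),
      g t x v k = δ k t x v +
        ∑ j ∈ Finset.univ.erase k, lam k j t x * (v j - v k + f k j t x v)) :
    (∀ k : Fin m, ∀ t ∈ Icc (0 : ℝ) T, ∀ x ∈ D, ∀ v : Fin m → ℝ,
      ((∀ j, v j ≤ v k) →
        g t x v k ≤ C * (1 + ((m : ℝ) - 1) * Λ)
          + C * (1 + ((m : ℝ) - 1) * Λ) * ⨆ j, |v j|) ∧
      ((∀ j, v k ≤ v j) →
        -(C * (1 + ((m : ℝ) - 1) * Λ)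
          + C * (1 + ((m : ℝ) - 1) * Λ) * ⨆ j, |v j|) ≤ g t x v k)) ∧
    (∀ 𝒦 : Set (Fin m → ℝ), IsCompact 𝒦 →
      ∃ L, ∀ t ∈ Icc (0 : ℝ) T, ∀ x ∈ D, ∀ v₁ ∈ 𝒦, ∀ v₂ ∈ 𝒦,
        ‖g t x v₁ - g t x v₂‖ ≤ L * ‖v₁ - v₂‖) :=
  linear_interaction_monotone_and_locally_lipschitz_general T D Λ C lam hlam δ f hδgrowth hfgrowth
    hδLip hfLip g hg
end

section
/- Let T > 0, D ⊆ ℝ^d nonempty, m ∈ ℕ and α > 0. For k, j ∈ {1,…,m}, let λ^{kj} : [0,T] × D → [0,∞) be bounded by Λ ≥ 0, and let δ^k, f^{kj} : [0,T] × D × ℝ^m → ℝ be bounded, with |δ^k| ≤ C_δ and |f^{kj}| ≤ C_f, and locally Lipschitz-continuous in v, uniformly in (t,x). Define g : [0,T] × D × ℝ^m → ℝ^m by g^k(t,x,v) := δ^k(t,x,v) + Σ_{j≠k} λ^{kj}(t,x) (1/α)(exp(α(v^j − v^k + f^{kj}(t,x,v))) − 1). Then g satisfies the monotonicity condition (2.20)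 with constants K1 = C_δ + (m−1) Λ (e^{α C_f} − 1)/α and K2 = 0, and g is locally Lipschitz-continuous in v, uniformly in (t,x). -/
open Set

/-! The summand `y ↦ (e^{αy} - 1)/α` is increasing and, since `e^a + e^{-a} ≥ 2`, it is bounded
below by `-(e^{αc} - 1)/α` on `[-c, ∞)`. If `vᵏ` is the largest coordinate, every exponent
`vʲ - vᵏ + fᵏʲ` is at most `C_f`, so each of the `m - 1` summands is at most `Λ (e^{α C_f} - 1)/α`;
symmetrically when `vᵏ` is the smallest. Local Lipschitz continuity, uniform in the parameter,
survives sums, products with bounded coefficients and composition with a locally Lipschitz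
function, provided the inner argument is bounded on compacts; the exponents are, because `f` is
bounded. -/

def UniformlyLocallyLipschitzOn {P V E : Type*} [SeminormedAddCommGroup V]
    [SeminormedAddCommGroup E] (S : Set P) (F : P → V → E) : Prop :=
  ∀ 𝒦 : Set V, IsCompact 𝒦 → ∃ L, ∀ p ∈ S, ∀ v₁ ∈ 𝒦, ∀ v₂ ∈ 𝒦,
    ‖F p v₁ - F p v₂‖ ≤ L * ‖v₁ - v₂‖

namespace UniformlyLocallyLipschitzOn

variable {P V E : Type*} [SeminormedAddCommGroup V] [SeminormedAddCommGroup E] {S : Set P}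

theorem prod_iff {A B : Type*} {s : Set A} {t : Set B} {F : A → B → V → E} :
    UniformlyLocallyLipschitzOn (s ×ˢ t) (fun p => F p.1 p.2) ↔
      ∀ 𝒦 : Set V, IsCompact 𝒦 → ∃ L, ∀ a ∈ s, ∀ b ∈ t, ∀ v₁ ∈ 𝒦, ∀ v₂ ∈ 𝒦,
        ‖F a b v₁ - F a b v₂‖ ≤ L * ‖v₁ - v₂‖ := by
  simp only [UniformlyLocallyLipschitzOn, forall_prod_set]

theorem zero : UniformlyLocallyLipschitzOn S (fun _ (_ : V) => (0 : E)) :=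
  fun _ _ => ⟨0, fun _ _ _ _ _ _ => by simp⟩

theorem add {F G : P → V → E} (hF : UniformlyLocallyLipschitzOn S F)
    (hG : UniformlyLocallyLipschitzOn S G) :
    UniformlyLocallyLipschitzOn S (fun p v => F p v + G p v) := by
  intro 𝒦 h𝒦
  obtain ⟨L₁, hL₁⟩ := hF 𝒦 h𝒦
  obtain ⟨L₂, hL₂⟩ := hG 𝒦 h𝒦
  refine ⟨L₁ + L₂, fun p hp v₁ hv₁ v₂ hv₂ => ?_⟩
  rw [add_sub_add_comm, add_mul]
  exact (norm_add_le _ _).trans (add_le_add (hL₁ p hp v₁ hv₁ v₂ hv₂) (hL₂ p hp v₁ hv₁ v₂ hv₂))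

theorem sub {F G : P → V → E} (hF : UniformlyLocallyLipschitzOn S F)
    (hG : UniformlyLocallyLipschitzOn S G) :
    UniformlyLocallyLipschitzOn S (fun p v => F p v - G p v) := by
  intro 𝒦 h𝒦
  obtain ⟨L₁, hL₁⟩ := hF 𝒦 h𝒦
  obtain ⟨L₂, hL₂⟩ := hG 𝒦 h𝒦
  refine ⟨L₁ + L₂, fun p hp v₁ hv₁ v₂ hv₂ => ?_⟩
  rw [sub_sub_sub_comm, add_mul]
  exact (norm_sub_le _ _).trans (add_le_add (hL₁ p hp v₁ hv₁ v₂ hv₂) (hL₂ p hp v₁ hv₁ v₂ hv₂))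

theorem sum {ι : Type*} (s : Finset ι) {F : ι → P → V → E}
    (hF : ∀ i ∈ s, UniformlyLocallyLipschitzOn S (F i)) :
    UniformlyLocallyLipschitzOn S (fun p v => ∑ i ∈ s, F i p v) := by
  induction s using Finset.cons_induction with
  | empty => simpa using zero
  | cons i s hi ih =>
    simp only [Finset.sum_cons]
    exact (hF i (Finset.mem_cons_self i s)).add
      (ih fun j hj => hF j (Finset.mem_cons_of_mem hj))

theorem mul_left_of_abs_le {F : P → V → ℝ} {c : P → ℝ} {Λ : ℝ} (hc : ∀ p ∈ S, |c p| ≤ Λ)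
    (hF : UniformlyLocallyLipschitzOn S F) :
    UniformlyLocallyLipschitzOn S (fun p v => c p * F p v) := by
  intro 𝒦 h𝒦
  obtain ⟨L, hL⟩ := hF 𝒦 h𝒦
  refine ⟨Λ * L, fun p hp v₁ hv₁ v₂ hv₂ => ?_⟩
  rw [← mul_sub, norm_mul, Real.norm_eq_abs, mul_assoc]
  exact mul_le_mul (hc p hp) (hL p hp v₁ hv₁ v₂ hv₂) (norm_nonneg _)
    ((abs_nonneg _).trans (hc p hp))

theorem eval {ι : Type*} [Fintype ι] (j : ι) :
    UniformlyLocallyLipschitzOn S (fun _ (v : ι → E) => v j) :=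
  fun _ _ => ⟨1, fun _ _ v₁ _ v₂ _ => by simpa using norm_le_pi_norm (v₁ - v₂) j⟩

theorem pi {ι : Type*} [Fintype ι] {F : ι → P → V → E}
    (hF : ∀ i, UniformlyLocallyLipschitzOn S (F i)) :
    UniformlyLocallyLipschitzOn S (fun p v i => F i p v) := by
  intro 𝒦 h𝒦
  choose L hL using fun i => hF i 𝒦 h𝒦
  refine ⟨∑ i, |L i|, fun p hp v₁ hv₁ v₂ hv₂ => ?_⟩
  refine (pi_norm_le_iff_of_nonneg (by positivity)).2 fun i => ?_
  calc ‖F i p v₁ - F i p v₂‖ ≤ L i * ‖v₁ - v₂‖ := hL i p hp v₁ hv₁ v₂ hv₂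
    _ ≤ (∑ i, |L i|) * ‖v₁ - v₂‖ := by
      gcongr
      exact (le_abs_self _).trans
        (Finset.single_le_sum (fun i _ => abs_nonneg (L i)) (Finset.mem_univ i))

theorem locallyLipschitz_comp {E' : Type*} [SeminormedAddCommGroup E'] [ProperSpace E]
    {F : P → V → E} {φ : E → E'} (hφ : LocallyLipschitz φ)
    (hF : UniformlyLocallyLipschitzOn S F)
    (hbdd : ∀ 𝒦 : Set V, IsCompact 𝒦 → ∃ c, ∀ p ∈ S, ∀ v ∈ 𝒦, ‖F p v‖ ≤ c) :
    UniformlyLocallyLipschitzOn S (fun p v => φ (F p v)) := by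
  intro 𝒦 h𝒦
  obtain ⟨L, hL⟩ := hF 𝒦 h𝒦
  obtain ⟨c, hc⟩ := hbdd 𝒦 h𝒦
  obtain ⟨M, hM⟩ := hφ.locallyLipschitzOn.exists_lipschitzOnWith_of_compact
    (isCompact_closedBall (0 : E) c)
  refine ⟨M * L, fun p hp v₁ hv₁ v₂ hv₂ => ?_⟩
  have hball : ∀ v ∈ 𝒦, F p v ∈ Metric.closedBall 0 c := fun v hv => by
    simpa using hc p hp v hv
  calc ‖φ (F p v₁) - φ (F p v₂)‖ ≤ M * ‖F p v₁ - F p v₂‖ := by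
        simpa only [dist_eq_norm] using hM.dist_le_mul _ (hball v₁ hv₁) _ (hball v₂ hv₂)
    _ ≤ M * (L * ‖v₁ - v₂‖) := by gcongr; exact hL p hp v₁ hv₁ v₂ hv₂
    _ = M * L * ‖v₁ - v₂‖ := by ring

end UniformlyLocallyLipschitzOn

noncomputable def expInteraction (α y : ℝ) : ℝ := 1 / α * (Real.exp (α * y) - 1)

section expInteraction

variable {α : ℝ}

theorem expInteraction_mono (hα : 0 < α) : Monotone (expInteraction α) := by
  intro a b hab
  unfold expInteraction
  gcongr

theorem expInteraction_nonneg (hα : 0 < α) {y : ℝ} (hy : 0 ≤ y) : 0 ≤ expInteraction α y := by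
  simpa [expInteraction] using expInteraction_mono hα hy

theorem neg_expInteraction_le_expInteraction_neg (hα : 0 < α) (y : ℝ) :
    -expInteraction α y ≤ expInteraction α (-y) := by
  have hcosh := Real.one_le_cosh (α * y)
  rw [Real.cosh_eq] at hcosh
  have h : 0 ≤ 1 / α * (Real.exp (α * y) + Real.exp (-(α * y)) - 2) :=
    mul_nonneg (by positivity) (by linarith)
  unfold expInteraction
  rw [mul_neg]
  linarith

theorem expInteraction_locallyLipschitz (α : ℝ) : LocallyLipschitz (expInteraction α) :=
  ContDiff.locallyLipschitz (𝕂 := ℝ) (by unfold expInteraction; fun_prop)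

variable {ι : Type*} {s : Finset ι} {lam y : ι → ℝ} {Λ c : ℝ}

theorem sum_mul_expInteraction_le (hα : 0 < α) (hc : 0 ≤ c)
    (hlam : ∀ j ∈ s, 0 ≤ lam j ∧ lam j ≤ Λ) (hy : ∀ j ∈ s, y j ≤ c) :
    ∑ j ∈ s, lam j * expInteraction α (y j) ≤ s.card * (Λ * expInteraction α c) := by
  rw [← nsmul_eq_mul]
  refine Finset.sum_le_card_nsmul _ _ _ fun j hj => ?_
  calc lam j * expInteraction α (y j) ≤ lam j * expInteraction α c :=
        mul_le_mul_of_nonneg_left (expInteraction_mono hα (hy j hj)) (hlam j hj).1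
    _ ≤ Λ * expInteraction α c :=
        mul_le_mul_of_nonneg_right (hlam j hj).2 (expInteraction_nonneg hα hc)

theorem neg_le_sum_mul_expInteraction (hα : 0 < α) (hc : 0 ≤ c)
    (hlam : ∀ j ∈ s, 0 ≤ lam j ∧ lam j ≤ Λ) (hy : ∀ j ∈ s, -c ≤ y j) :
    -(s.card * (Λ * expInteraction α c)) ≤ ∑ j ∈ s, lam j * expInteraction α (y j) := by
  rw [← mul_neg, ← nsmul_eq_mul]
  refine Finset.card_nsmul_le_sum _ _ _ fun j hj => ?_
  calc -(Λ * expInteraction α c) ≤ lam j * -expInteraction α c := by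
        rw [mul_neg, neg_le_neg_iff]
        exact mul_le_mul_of_nonneg_right (hlam j hj).2 (expInteraction_nonneg hα hc)
    _ ≤ lam j * expInteraction α (y j) := by
        refine mul_le_mul_of_nonneg_left ?_ (hlam j hj).1
        exact (neg_expInteraction_le_expInteraction_neg hα c).trans
          (expInteraction_mono hα (hy j hj))

end expInteraction

theorem UniformlyLocallyLipschitzOn.mul_expInteraction {P ι : Type*} [Fintype ι] {S : Set P}
    {lam : P → ℝ} {f : P → (ι → ℝ) → ℝ} {Λ Cf : ℝ} (α : ℝ)
    (hlam : ∀ p ∈ S, 0 ≤ lam p ∧ lam p ≤ Λ) (hfb : ∀ p ∈ S, ∀ v, |f p v| ≤ Cf)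
    (hf : UniformlyLocallyLipschitzOn S f) (j k : ι) :
    UniformlyLocallyLipschitzOn S
      (fun p v => lam p * expInteraction α (v j - v k + f p v)) := by
  refine mul_left_of_abs_le (fun p hp => (abs_of_nonneg (hlam p hp).1).trans_le (hlam p hp).2)
    ((((eval j).sub (eval k)).add hf).locallyLipschitz_comp
      (expInteraction_locallyLipschitz α) fun 𝒦 h𝒦 => ?_)
  obtain ⟨R, hR⟩ := h𝒦.isBounded.exists_norm_le
  have hcoord : ∀ v ∈ 𝒦, ∀ i, |v i| ≤ R := fun v hv i =>
    (norm_le_pi_norm v i).trans (hR v hv)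
  refine ⟨R + R + Cf, fun p hp v hv => ?_⟩
  calc ‖v j - v k + f p v‖ ≤ |v j| + |v k| + |f p v| := by
        rw [Real.norm_eq_abs]
        exact (abs_add_le _ _).trans (add_le_add_left (abs_sub _ _) _)
    _ ≤ R + R + Cf := by gcongr <;> [exact hcoord v hv j; exact hcoord v hv k; exact hfb p hp v]

theorem Fin.card_univ_erase_cast {m : ℕ} (k : Fin m) :
    (((Finset.univ : Finset (Fin m)).erase k).card : ℝ) = m - 1 := by
  rw [Finset.card_erase_of_mem (Finset.mem_univ k), Finset.card_univ, Fintype.card_fin,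
    Nat.cast_sub k.pos, Nat.cast_one]

theorem exponential_interaction_monotone_and_locally_lipschitz_general
    {d m : ℕ} (T : ℝ) (α : ℝ) (hα : 0 < α)
    (D : Set (Fin d → ℝ))
    (Λ : ℝ) (Cδ Cf : ℝ)
    (lam : Fin m → Fin m → ℝ → (Fin d → ℝ) → ℝ)
    (hlam : ∀ k j : Fin m, ∀ t ∈ Icc (0 : ℝ) T, ∀ x ∈ D,
      0 ≤ lam k j t x ∧ lam k j t x ≤ Λ)
    (δ : Fin m → ℝ → (Fin d → ℝ) → (Fin m → ℝ) → ℝ)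
    (f : Fin m → Fin m → ℝ → (Fin d → ℝ) → (Fin m → ℝ) → ℝ)
    (hδb : ∀ k : Fin m, ∀ t ∈ Icc (0 : ℝ) T, ∀ x ∈ D, ∀ v : Fin m → ℝ,
      |δ k t x v| ≤ Cδ)
    (hfb : ∀ k j : Fin m, ∀ t ∈ Icc (0 : ℝ) T, ∀ x ∈ D, ∀ v : Fin m → ℝ,
      |f k j t x v| ≤ Cf)
    (hδLip : ∀ k : Fin m, ∀ 𝒦 : Set (Fin m → ℝ), IsCompact 𝒦 →
      ∃ L, ∀ t ∈ Icc (0 : ℝ) T, ∀ x ∈ D, ∀ v₁ ∈ 𝒦, ∀ v₂ ∈ 𝒦,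
        |δ k t x v₁ - δ k t x v₂| ≤ L * ‖v₁ - v₂‖)
    (hfLip : ∀ k j : Fin m, ∀ 𝒦 : Set (Fin m → ℝ), IsCompact 𝒦 →
      ∃ L, ∀ t ∈ Icc (0 : ℝ) T, ∀ x ∈ D, ∀ v₁ ∈ 𝒦, ∀ v₂ ∈ 𝒦,
        |f k j t x v₁ - f k j t x v₂| ≤ L * ‖v₁ - v₂‖)
    (g : ℝ → (Fin d → ℝ) → (Fin m → ℝ) → Fin m → ℝ)
    (hg : ∀ (k : Fin m) t x (v : Fin m → ℝ),
      g t x v k = δ k t x v +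
        ∑ j ∈ Finset.univ.erase k, lam k j t x *
          ((1 / α) * (Real.exp (α * (v j - v k + f k j t x v)) - 1))) :
    (∀ k : Fin m, ∀ t ∈ Icc (0 : ℝ) T, ∀ x ∈ D, ∀ v : Fin m → ℝ,
      ((∀ j, v j ≤ v k) →
        g t x v k ≤ Cδ + ((m : ℝ) - 1) * Λ * ((Real.exp (α * Cf) - 1) / α)) ∧
      ((∀ j, v k ≤ v j) →
        -(Cδ + ((m : ℝ) - 1) * Λ * ((Real.exp (α * Cf) - 1) / α)) ≤ g t x v k)) ∧
    (∀ 𝒦 : Set (Fin m → ℝ), IsCompact 𝒦 →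
      ∃ L, ∀ t ∈ Icc (0 : ℝ) T, ∀ x ∈ D, ∀ v₁ ∈ 𝒦, ∀ v₂ ∈ 𝒦,
        ‖g t x v₁ - g t x v₂‖ ≤ L * ‖v₁ - v₂‖) := by
  have hg' : ∀ k t x v, g t x v k = δ k t x v +
      ∑ j ∈ Finset.univ.erase k, lam k j t x * expInteraction α (v j - v k + f k j t x v) := hg
  have hK1 : (Real.exp (α * Cf) - 1) / α = expInteraction α Cf := by
    rw [expInteraction, one_div_mul_eq_div]
  refine ⟨fun k t ht x hx v => ?_, ?_⟩
  · have hCf : 0 ≤ Cf := (abs_nonneg _).trans (hfb k k t ht x hx v)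
    have hδ := abs_le.1 (hδb k t ht x hx v)
    have hf := fun j => abs_le.1 (hfb k j t ht x hx v)
    rw [hK1, ← Fin.card_univ_erase_cast k, hg']
    refine ⟨fun hvk => ?_, fun hvk => ?_⟩
    · linarith [sum_mul_expInteraction_le (s := Finset.univ.erase k)
        (y := fun j => v j - v k + f k j t x v) hα hCf (fun j _ => hlam k j t ht x hx)
        (fun j _ => by linarith [hvk j, (hf j).2])]
    · linarith [neg_le_sum_mul_expInteraction (s := Finset.univ.erase k)
        (y := fun j => v j - v k + f k j t x v) hα hCf (fun j _ => hlam k j t ht x hx)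
        (fun j _ => by linarith [hvk j, (hf j).1])]
  · refine UniformlyLocallyLipschitzOn.prod_iff.1 (.pi fun k => ?_)
    simp only [hg']
    exact (UniformlyLocallyLipschitzOn.prod_iff.2 (hδLip k)).add <| .sum _ fun j _ =>
      .mul_expInteraction α (fun p hp => hlam k j p.1 hp.1 p.2 hp.2)
        (fun p hp => hfb k j p.1 hp.1 p.2 hp.2)
        (UniformlyLocallyLipschitzOn.prod_iff.2 (hfLip k j)) j k

/-- The exponential interaction term (2.23),
`gᵏ(t,x,v) = δᵏ(t,x,v) + Σ_{j≠k} λᵏʲ(t,x)·(1/α)(exp(α(vʲ − vᵏ + fᵏʲ(t,x,v))) − 1)`,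
with `0 ≤ λᵏʲ ≤ Λ`, `|δᵏ| ≤ C_δ`, `|fᵏʲ| ≤ C_f` and `δᵏ, fᵏʲ` locally Lipschitz in
`v` uniformly in `(t,x)`, satisfies the monotonicity condition (2.20) with
`K1 = C_δ + (m−1) Λ (e^{α C_f} − 1)/α` and `K2 = 0`, and is locally Lipschitz
in `v` uniformly in `(t,x)`. -/
theorem exponential_interaction_monotone_and_locally_lipschitz
    {d m : ℕ} (T : ℝ) (hT : 0 < T) (α : ℝ) (hα : 0 < α)
    (D : Set (Fin d → ℝ)) (hD : D.Nonempty)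
    (Λ : ℝ) (hΛ : 0 ≤ Λ) (Cδ Cf : ℝ)
    (lam : Fin m → Fin m → ℝ → (Fin d → ℝ) → ℝ)
    (hlam : ∀ k j : Fin m, ∀ t ∈ Icc (0 : ℝ) T, ∀ x ∈ D,
      0 ≤ lam k j t x ∧ lam k j t x ≤ Λ)
    (δ : Fin m → ℝ → (Fin d → ℝ) → (Fin m → ℝ) → ℝ)
    (f : Fin m → Fin m → ℝ → (Fin d → ℝ) → (Fin m → ℝ) → ℝ)
    (hδb : ∀ k : Fin m, ∀ t ∈ Icc (0 : ℝ) T, ∀ x ∈ D, ∀ v : Fin m → ℝ,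
      |δ k t x v| ≤ Cδ)
    (hfb : ∀ k j : Fin m, ∀ t ∈ Icc (0 : ℝ) T, ∀ x ∈ D, ∀ v : Fin m → ℝ,
      |f k j t x v| ≤ Cf)
    (hδLip : ∀ k : Fin m, ∀ 𝒦 : Set (Fin m → ℝ), IsCompact 𝒦 →
      ∃ L, ∀ t ∈ Icc (0 : ℝ) T, ∀ x ∈ D, ∀ v₁ ∈ 𝒦, ∀ v₂ ∈ 𝒦,
        |δ k t x v₁ - δ k t x v₂| ≤ L * ‖v₁ - v₂‖)
    (hfLip : ∀ k j : Fin m, ∀ 𝒦 : Set (Fin m → ℝ), IsCompact 𝒦 →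
      ∃ L, ∀ t ∈ Icc (0 : ℝ) T, ∀ x ∈ D, ∀ v₁ ∈ 𝒦, ∀ v₂ ∈ 𝒦,
        |f k j t x v₁ - f k j t x v₂| ≤ L * ‖v₁ - v₂‖)
    (g : ℝ → (Fin d → ℝ) → (Fin m → ℝ) → Fin m → ℝ)
    (hg : ∀ (k : Fin m) t x (v : Fin m → ℝ),
      g t x v k = δ k t x v +
        ∑ j ∈ Finset.univ.erase k, lam k j t x *
          ((1 / α) * (Real.exp (α * (v j - v k + f k j t x v)) - 1))) :
    (∀ k : Fin m, ∀ t ∈ Icc (0 : ℝ) T, ∀ x ∈ D, ∀ v : Fin m → ℝ,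
      ((∀ j, v j ≤ v k) →
        g t x v k ≤ Cδ + ((m : ℝ) - 1) * Λ * ((Real.exp (α * Cf) - 1) / α)) ∧
      ((∀ j, v k ≤ v j) →
        -(Cδ + ((m : ℝ) - 1) * Λ * ((Real.exp (α * Cf) - 1) / α)) ≤ g t x v k)) ∧
    (∀ 𝒦 : Set (Fin m → ℝ), IsCompact 𝒦 →
      ∃ L, ∀ t ∈ Icc (0 : ℝ) T, ∀ x ∈ D, ∀ v₁ ∈ 𝒦, ∀ v₂ ∈ 𝒦,
        ‖g t x v₁ - g t x v₂‖ ≤ L * ‖v₁ - v₂‖) :=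
  exponential_interaction_monotone_and_locally_lipschitz_general T α hα D Λ Cδ Cf lam hlam δ f hδb
    hfb hδLip hfLip g hg
end

section
/- Let T > 0, let (Ω, 𝓕, (𝓕_t)_{t ∈ [0,T]}, Q) be a filtered probability space, let H be a bounded 𝓕_T-measurable random variable, and let g : [0,T] × Ω × ℝ → ℝ be jointly measurable with |g(u,ω,y)| ≤ C(1 + |y|) for a constant C ≥ 0 and all u, ω, y, and locally Lipschitz-continuous in the last argument, uniformly in (u,ω): for every R > 0 there exists L = L(R) < ∞ such that |g(u,ω,y1) − g(u,ω,y2)| ≤ L |y1 − y2| for all (u,ω) and all y1, y2 ∈ [−R, R]. Suppose V^1, V^2 : [0,T] × Ω → ℝ are jointly measurable, uniformly bounded processes such that for each i = 1, 2 and every t ∈ [0,T], V^i_t = E_Q[ H + ∫_t^T g(u, ·, V^i_u) du | 𝓕_t ] Q-almost surely. Then for every t ∈ [0,T], V^1_t = V^2_t Q-almost surely. -/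
/-!
Let `h t = E |V₁ t - V₂ t|`. Both processes are bounded by some `B`, so only the Lipschitz
constant `L` of `g` on `[-B, B]` matters. Subtracting the two equations, `H` cancels;
conditional expectation is an `L¹` contraction, so Fubini gives the backward integral
inequality `h t ≤ L ∫_t^T h`. Iterating it yields `h t ≤ 2B (L (T - t))ⁿ / n! → 0`.
-/

open MeasureTheory Set Filter Function

section BoundedProcesses

variable {α β : Type*} [MeasurableSpace α] [MeasurableSpace β] {μ : Measure α} {ν : Measure β}
  [IsFiniteMeasure μ] [IsFiniteMeasure ν] {K : ℝ}

theorem integrable_uncurry_of_abs_le {φ : α → β → ℝ} (hφ : Measurable (uncurry φ))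
    (hK : ∀ a b, |φ a b| ≤ K) : Integrable (uncurry φ) (μ.prod ν) :=
  .of_bound hφ.aestronglyMeasurable K (ae_of_all _ fun p => hK p.1 p.2)

theorem integrable_apply_of_abs_le {φ : α → β → ℝ} (hφ : Measurable (uncurry φ))
    (hK : ∀ a b, |φ a b| ≤ K) (a : α) : Integrable (φ a) ν :=
  .of_bound (hφ.comp measurable_prodMk_left).aestronglyMeasurable K (ae_of_all _ (hK a))

theorem integrable_integral_of_abs_le {φ : α → β → ℝ} (hφ : Measurable (uncurry φ))
    (hK : ∀ a b, |φ a b| ≤ K) : Integrable (fun a => ∫ b, φ a b ∂ν) μ :=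
  (integrable_uncurry_of_abs_le hφ hK).integral_prod_left

theorem integral_abs_integral_sub_le {φ₁ φ₂ : α → β → ℝ} (hφ₁ : Measurable (uncurry φ₁))
    (hφ₂ : Measurable (uncurry φ₂)) (hK₁ : ∀ a b, |φ₁ a b| ≤ K) (hK₂ : ∀ a b, |φ₂ a b| ≤ K) :
    ∫ b, |∫ a, φ₁ a b ∂μ - ∫ a, φ₂ a b ∂μ| ∂ν ≤ ∫ a, ∫ b, |φ₁ a b - φ₂ a b| ∂ν ∂μ := by
  have hψ : Measurable (uncurry fun b a => |φ₁ a b - φ₂ a b|) :=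
    ((hφ₁.sub hφ₂).abs).comp measurable_swap
  have hψK : ∀ b a, |(|φ₁ a b - φ₂ a b|)| ≤ 2 * K := fun b a => by
    rw [abs_abs]
    linarith [abs_sub (φ₁ a b) (φ₂ a b), hK₁ a b, hK₂ a b]
  have hint₁ : ∀ b, Integrable (fun a => φ₁ a b) μ :=
    integrable_apply_of_abs_le (hφ₁.comp measurable_swap) fun b a => hK₁ a b
  have hint₂ : ∀ b, Integrable (fun a => φ₂ a b) μ :=
    integrable_apply_of_abs_le (hφ₂.comp measurable_swap) fun b a => hK₂ a b
  calc ∫ b, |∫ a, φ₁ a b ∂μ - ∫ a, φ₂ a b ∂μ| ∂ν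
      = ∫ b, |∫ a, (φ₁ a b - φ₂ a b) ∂μ| ∂ν := by
        simp_rw [integral_sub (hint₁ _) (hint₂ _)]
    _ ≤ ∫ b, ∫ a, |φ₁ a b - φ₂ a b| ∂μ ∂ν :=
        integral_mono_of_nonneg (ae_of_all _ fun _ => abs_nonneg _)
          (integrable_integral_of_abs_le hψ hψK) (ae_of_all _ fun _ => abs_integral_le_integral_abs)
    _ = ∫ a, ∫ b, |φ₁ a b - φ₂ a b| ∂ν ∂μ :=
        integral_integral_swap (integrable_uncurry_of_abs_le hψ hψK)

end BoundedProcesses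

theorem setIntegral_Icc_sub_pow {t T : ℝ} (htT : t ≤ T) (n : ℕ) :
    ∫ u in Icc t T, (T - u) ^ n = (T - t) ^ (n + 1) / (n + 1) := by
  rw [integral_Icc_eq_integral_Ioc, ← intervalIntegral.integral_of_le htT,
    intervalIntegral.integral_comp_sub_left (fun x => x ^ n) T, sub_self, integral_pow]
  simp

section Gronwall

variable {h : ℝ → ℝ} {a T L M : ℝ}

theorem le_mul_pow_div_factorial_of_le_mul_setIntegral (hL : 0 ≤ L)
    (hint : IntegrableOn h (Icc a T)) (hM : ∀ t ∈ Icc a T, h t ≤ M)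
    (hrec : ∀ t ∈ Icc a T, h t ≤ L * ∫ u in Icc t T, h u) (n : ℕ) :
    ∀ t ∈ Icc a T, h t ≤ M * L ^ n * (T - t) ^ n / n.factorial := by
  induction n with
  | zero => simpa using hM
  | succ n ih =>
    intro t ht
    have hsub : Icc t T ⊆ Icc a T := Icc_subset_Icc_left ht.1
    have hmono : ∫ u in Icc t T, h u ≤ ∫ u in Icc t T, M * L ^ n / n.factorial * (T - u) ^ n :=
      setIntegral_mono_on (hint.mono_set hsub) (by fun_prop : Continuous _).integrableOn_Icc
        measurableSet_Icc fun u hu => (ih u (hsub hu)).trans_eq (by ring)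
    calc h t ≤ L * ∫ u in Icc t T, h u := hrec t ht
      _ ≤ L * ∫ u in Icc t T, M * L ^ n / n.factorial * (T - u) ^ n := by gcongr
      _ = M * L ^ (n + 1) * (T - t) ^ (n + 1) / (n + 1).factorial := by
        rw [integral_const_mul, setIntegral_Icc_sub_pow ht.2, Nat.factorial_succ]
        push_cast
        field_simp
        ring

theorem eq_zero_of_le_mul_setIntegral_Icc (hL : 0 ≤ L)
    (hint : IntegrableOn h (Icc a T)) (h0 : ∀ t ∈ Icc a T, 0 ≤ h t)
    (hM : ∀ t ∈ Icc a T, h t ≤ M) (hrec : ∀ t ∈ Icc a T, h t ≤ L * ∫ u in Icc t T, h u) :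
    ∀ t ∈ Icc a T, h t = 0 := by
  intro t ht
  have hlim : Tendsto (fun n : ℕ => M * ((L * (T - t)) ^ n / n.factorial)) atTop (nhds 0) := by
    simpa using (FloorSemiring.tendsto_pow_div_factorial_atTop (L * (T - t))).const_mul M
  refine le_antisymm (ge_of_tendsto' hlim fun n => ?_) (h0 t ht)
  rw [mul_pow, ← mul_div_assoc, ← mul_assoc]
  exact le_mul_pow_div_factorial_of_le_mul_setIntegral hL hint hM hrec n t ht

end Gronwall

section ConditionalExpectation

variable {Ω : Type*} {m m0 : MeasurableSpace Ω} {μ : Measure Ω}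

theorem integral_abs_sub_le_of_ae_eq_condExp {X₁ X₂ F₁ F₂ : Ω → ℝ} (hF₁ : Integrable F₁ μ)
    (hF₂ : Integrable F₂ μ) (h₁ : X₁ =ᵐ[μ] μ[F₁|m]) (h₂ : X₂ =ᵐ[μ] μ[F₂|m]) :
    ∫ ω, |X₁ ω - X₂ ω| ∂μ ≤ ∫ ω, |F₁ ω - F₂ ω| ∂μ := by
  have hX : (fun ω => |X₁ ω - X₂ ω|) =ᵐ[μ] fun ω => |μ[F₁ - F₂|m] ω| := by
    filter_upwards [h₁, h₂, condExp_sub hF₁ hF₂ m] with ω h₁ω h₂ω hω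
    rw [h₁ω, h₂ω, hω, Pi.sub_apply]
  rw [integral_congr_ae hX]
  exact integral_abs_condExp_le _

theorem ae_eq_of_integral_abs_sub_eq_zero {X₁ X₂ : Ω → ℝ}
    (hX : Integrable (fun ω => |X₁ ω - X₂ ω|) μ) (h : ∫ ω, |X₁ ω - X₂ ω| ∂μ = 0) :
    X₁ =ᵐ[μ] X₂ := by
  filter_upwards [(integral_eq_zero_iff_of_nonneg (fun _ => abs_nonneg _) hX).mp h] with ω hω
  exact sub_eq_zero.mp (abs_eq_zero.mp hω)

variable {α : Type*} [MeasurableSpace α] {ν : Measure α} [IsFiniteMeasure ν] [IsFiniteMeasure μ]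
  {H : Ω → ℝ} {g : α → Ω → ℝ → ℝ} {V₁ V₂ : α → Ω → ℝ} {X₁ X₂ : Ω → ℝ} {K B L : ℝ}

theorem integral_abs_sub_le_mul_integral_of_ae_eq_condExp (hH : Integrable H μ)
    (hg : Measurable fun p : α × Ω × ℝ => g p.1 p.2.1 p.2.2)
    (hV₁ : Measurable (uncurry V₁)) (hV₂ : Measurable (uncurry V₂))
    (hVB : ∀ u ω, |V₁ u ω - V₂ u ω| ≤ B)
    (hgK : ∀ u ω, |g u ω (V₁ u ω)| ≤ K ∧ |g u ω (V₂ u ω)| ≤ K)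
    (hLip : ∀ u ω, |g u ω (V₁ u ω) - g u ω (V₂ u ω)| ≤ L * |V₁ u ω - V₂ u ω|)
    (h₁ : X₁ =ᵐ[μ] μ[fun ω => H ω + ∫ u, g u ω (V₁ u ω) ∂ν|m])
    (h₂ : X₂ =ᵐ[μ] μ[fun ω => H ω + ∫ u, g u ω (V₂ u ω) ∂ν|m]) :
    ∫ ω, |X₁ ω - X₂ ω| ∂μ ≤ L * ∫ u, ∫ ω, |V₁ u ω - V₂ u ω| ∂μ ∂ν := by
  have hG₁ : Measurable (uncurry fun u ω => g u ω (V₁ u ω)) :=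
    hg.comp (measurable_fst.prodMk (measurable_snd.prodMk hV₁))
  have hG₂ : Measurable (uncurry fun u ω => g u ω (V₂ u ω)) :=
    hg.comp (measurable_fst.prodMk (measurable_snd.prodMk hV₂))
  have hD : Measurable (uncurry fun u ω => |V₁ u ω - V₂ u ω|) := (hV₁.sub hV₂).abs
  have hDB : ∀ u ω, |(|V₁ u ω - V₂ u ω|)| ≤ B := fun u ω => (abs_abs _).trans_le (hVB u ω)
  calc ∫ ω, |X₁ ω - X₂ ω| ∂μ
      ≤ ∫ ω, |(H ω + ∫ u, g u ω (V₁ u ω) ∂ν) - (H ω + ∫ u, g u ω (V₂ u ω) ∂ν)| ∂μ :=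
        integral_abs_sub_le_of_ae_eq_condExp
          (hH.add (integrable_integral_of_abs_le (hG₁.comp measurable_swap) fun ω u => (hgK u ω).1))
          (hH.add (integrable_integral_of_abs_le (hG₂.comp measurable_swap) fun ω u => (hgK u ω).2))
          h₁ h₂
    _ ≤ ∫ u, ∫ ω, |g u ω (V₁ u ω) - g u ω (V₂ u ω)| ∂μ ∂ν := by
        simp_rw [add_sub_add_left_eq_sub]
        exact integral_abs_integral_sub_le hG₁ hG₂ (fun u ω => (hgK u ω).1) fun u ω => (hgK u ω).2
    _ ≤ ∫ u, L * ∫ ω, |V₁ u ω - V₂ u ω| ∂μ ∂ν :=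
        integral_mono_of_nonneg (ae_of_all _ fun _ => integral_nonneg fun _ => abs_nonneg _)
          ((integrable_integral_of_abs_le hD hDB).const_mul L) (ae_of_all _ fun u =>
            (integral_mono_of_nonneg (ae_of_all _ fun _ => abs_nonneg _)
              ((integrable_apply_of_abs_le hD hDB u).const_mul L) (ae_of_all _ (hLip u))).trans_eq
              (integral_const_mul L _))
    _ = L * ∫ u, ∫ ω, |V₁ u ω - V₂ u ω| ∂μ ∂ν := integral_const_mul L _

end ConditionalExpectation

theorem recursive_valuation_uniqueness_general
    {Ω : Type*} {m0 : MeasurableSpace Ω} (Q : Measure Ω) [IsProbabilityMeasure Q]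
    (T : ℝ)
    (𝓕 : Filtration ℝ m0)
    (H : Ω → ℝ) (hHmeas : Measurable[𝓕 T] H)
    (hHb : ∃ C, ∀ ω, |H ω| ≤ C)
    (g : ℝ → Ω → ℝ → ℝ)
    (hgmeas : Measurable fun p : ℝ × Ω × ℝ => g p.1 p.2.1 p.2.2)
    (C : ℝ) (hC : 0 ≤ C)
    (hgrowth : ∀ u ω y, |g u ω y| ≤ C * (1 + |y|))
    (hgLip : ∀ R > (0 : ℝ), ∃ L, ∀ (u : ℝ) (ω : Ω),
      ∀ y₁ ∈ Icc (-R) R, ∀ y₂ ∈ Icc (-R) R,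
        |g u ω y₁ - g u ω y₂| ≤ L * |y₁ - y₂|)
    (V₁ V₂ : ℝ → Ω → ℝ)
    (hV₁meas : Measurable fun p : ℝ × Ω => V₁ p.1 p.2)
    (hV₂meas : Measurable fun p : ℝ × Ω => V₂ p.1 p.2)
    (hVb : ∃ B, ∀ t ω, |V₁ t ω| ≤ B ∧ |V₂ t ω| ≤ B)
    (hV₁ : ∀ t ∈ Icc (0 : ℝ) T,
      V₁ t =ᵐ[Q] Q[fun ω => H ω + ∫ u in Icc t T, g u ω (V₁ u ω)|𝓕 t])
    (hV₂ : ∀ t ∈ Icc (0 : ℝ) T,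
      V₂ t =ᵐ[Q] Q[fun ω => H ω + ∫ u in Icc t T, g u ω (V₂ u ω)|𝓕 t]) :
    ∀ t ∈ Icc (0 : ℝ) T, V₁ t =ᵐ[Q] V₂ t := by
  obtain ⟨CH, hCH⟩ := hHb
  obtain ⟨B, hB⟩ := hVb
  obtain ⟨L, hL⟩ := hgLip (max B 1) (by positivity)
  have hH : Integrable H Q :=
    .of_bound (hHmeas.mono (𝓕.le T) le_rfl).aestronglyMeasurable CH (ae_of_all _ hCH)
  have hgK : ∀ u ω, |g u ω (V₁ u ω)| ≤ C * (1 + B) ∧ |g u ω (V₂ u ω)| ≤ C * (1 + B) :=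
    fun u ω => ⟨(hgrowth u ω _).trans (by gcongr; exact (hB u ω).1),
      (hgrowth u ω _).trans (by gcongr; exact (hB u ω).2)⟩
  have hLip : ∀ u ω, |g u ω (V₁ u ω) - g u ω (V₂ u ω)| ≤ max L 0 * |V₁ u ω - V₂ u ω| :=
    fun u ω => (hL u ω _ (abs_le.mp ((hB u ω).1.trans (le_max_left B 1))) _
      (abs_le.mp ((hB u ω).2.trans (le_max_left B 1)))).trans (by gcongr; exact le_max_left L 0)
  have hVB : ∀ u ω, |V₁ u ω - V₂ u ω| ≤ 2 * B := fun u ω => by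
    linarith [abs_sub (V₁ u ω) (V₂ u ω), hB u ω]
  have hDB : ∀ u ω, |(|V₁ u ω - V₂ u ω|)| ≤ 2 * B := fun u ω => (abs_abs _).trans_le (hVB u ω)
  have hD : ∀ t, Integrable (fun ω => |V₁ t ω - V₂ t ω|) Q :=
    integrable_apply_of_abs_le (hV₁meas.sub hV₂meas).abs hDB
  have hM : ∀ t, ∫ ω, |V₁ t ω - V₂ t ω| ∂Q ≤ 2 * B := fun t =>
    (integral_mono (hD t) (integrable_const _) (hVB t)).trans_eq (by simp)
  have hzero := eq_zero_of_le_mul_setIntegral_Icc (h := fun u => ∫ ω, |V₁ u ω - V₂ u ω| ∂Q)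
    (M := 2 * B) (le_max_right L 0)
    (integrable_integral_of_abs_le (hV₁meas.sub hV₂meas).abs hDB)
    (fun t _ => integral_nonneg fun _ => abs_nonneg _)
    (fun t _ => hM t)
    fun t ht => integral_abs_sub_le_mul_integral_of_ae_eq_condExp hH hgmeas hV₁meas hV₂meas hVB
      hgK hLip (hV₁ t ht) (hV₂ t ht)
  exact fun t ht => ae_eq_of_integral_abs_sub_eq_zero (hD t) (hzero t ht)

/-- (Abstract core of Lemma 4.3.) On a filtered probability
space, there is at most one uniformly bounded jointly measurable process `V`
satisfying the recursive conditional-expectation equation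
`V_t = E_Q[ H + ∫_t^T g(u,·,V_u) du | 𝓕_t ]` for all `t ∈ [0,T]`, when `H` is
bounded `𝓕_T`-measurable and `g` has linear growth and is locally Lipschitz in
its last argument, uniformly in `(u,ω)`. -/
theorem recursive_valuation_uniqueness
    {Ω : Type*} {m0 : MeasurableSpace Ω} (Q : Measure Ω) [IsProbabilityMeasure Q]
    (T : ℝ) (hT : 0 < T)
    (𝓕 : Filtration ℝ m0)
    (H : Ω → ℝ) (hHmeas : Measurable[𝓕 T] H)
    (hHb : ∃ C, ∀ ω, |H ω| ≤ C)
    (g : ℝ → Ω → ℝ → ℝ)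
    (hgmeas : Measurable fun p : ℝ × Ω × ℝ => g p.1 p.2.1 p.2.2)
    (C : ℝ) (hC : 0 ≤ C)
    (hgrowth : ∀ u ω y, |g u ω y| ≤ C * (1 + |y|))
    (hgLip : ∀ R > (0 : ℝ), ∃ L, ∀ (u : ℝ) (ω : Ω),
      ∀ y₁ ∈ Icc (-R) R, ∀ y₂ ∈ Icc (-R) R,
        |g u ω y₁ - g u ω y₂| ≤ L * |y₁ - y₂|)
    (V₁ V₂ : ℝ → Ω → ℝ)
    (hV₁meas : Measurable fun p : ℝ × Ω => V₁ p.1 p.2)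
    (hV₂meas : Measurable fun p : ℝ × Ω => V₂ p.1 p.2)
    (hVb : ∃ B, ∀ t ω, |V₁ t ω| ≤ B ∧ |V₂ t ω| ≤ B)
    (hV₁ : ∀ t ∈ Icc (0 : ℝ) T,
      V₁ t =ᵐ[Q] Q[fun ω => H ω + ∫ u in Icc t T, g u ω (V₁ u ω)|𝓕 t])
    (hV₂ : ∀ t ∈ Icc (0 : ℝ) T,
      V₂ t =ᵐ[Q] Q[fun ω => H ω + ∫ u in Icc t T, g u ω (V₂ u ω)|𝓕 t]) :
    ∀ t ∈ Icc (0 : ℝ) T, V₁ t =ᵐ[Q] V₂ t :=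
  recursive_valuation_uniqueness_general Q T 𝓕 H hHmeas hHb g hgmeas C hC hgrowth hgLip V₁ V₂
    hV₁meas hV₂meas hVb hV₁ hV₂
end
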